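/- Let L be a GO-space. If for every x ∈ L that is isolated from at least one side and every y ∈ L the set W(x;{y}) = {f ∈ M(L) : f(x) = y} is open in M_p(L), then the operation of inversion f ↦ f⁻¹ is continuous on M_p(L). -/

import Mathlib

open Set Topology TopologicalSpace Filter

variable (L : Type*) [LinearOrder L] [TopologicalSpace L]

/-- The set `M(L)` of monotonic autohomeomorphisms of `L`: homeomorphisms `L → L` that are
either strictly increasing or strictly decreasing. -/
abbrev MonoHomeo := {f : L ≃ₜ L // StrictMono f ∨ StrictAnti f}

namespace MonoHomeo

variable {L}

/-- The topology of pointwise convergence on `M(L)`, giving `M_p(L)`: the topology induced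
from the product topology on `L → L` via the underlying-function map. -/
instance : TopologicalSpace (MonoHomeo L) :=
  TopologicalSpace.induced (fun f => ((f.1 : L ≃ₜ L) : L → L)) Pi.topologicalSpace

theorem symm_strictMono {e : L ≃ₜ L} (h : StrictMono e) : StrictMono (e.symm : L → L) := by
  intro a b hab
  rw [← e.apply_symm_apply a, ← e.apply_symm_apply b] at hab
  exact h.lt_iff_lt.mp hab

theorem symm_strictAnti {e : L ≃ₜ L} (h : StrictAnti e) : StrictAnti (e.symm : L → L) := by
  intro a b hab
  rw [← e.apply_symm_apply a, ← e.apply_symm_apply b] at hab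
  exact not_le.mp fun hle => absurd hab (not_lt.mpr (h.antitone hle))

/-- Composition in `M(L)`: `f * g = f ∘ g`. -/
instance : Mul (MonoHomeo L) :=
  ⟨fun f g => ⟨g.1.trans f.1, by
    rcases f.2 with hf | hf <;> rcases g.2 with hg | hg
    · exact Or.inl (hf.comp hg)
    · exact Or.inr (hf.comp_strictAnti hg)
    · exact Or.inr (hf.comp_strictMono hg)
    · exact Or.inl (hf.comp hg)⟩⟩

instance : One (MonoHomeo L) := ⟨⟨Homeomorph.refl L, Or.inl strictMono_id⟩⟩

/-- Inversion in `M(L)`. -/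
instance : Inv (MonoHomeo L) :=
  ⟨fun f => ⟨f.1.symm, by
    rcases f.2 with hf | hf
    · exact Or.inl (symm_strictMono hf)
    · exact Or.inr (symm_strictAnti hf)⟩⟩

@[simp] theorem mul_apply (f g : MonoHomeo L) (x : L) : (f * g).1 x = f.1 (g.1 x) := rfl

@[simp] theorem inv_apply (f : MonoHomeo L) (x : L) : (f⁻¹).1 x = f.1.symm x := rfl

@[simp] theorem one_apply (x : L) : (1 : MonoHomeo L).1 x = x := rfl

/-- `M(L)` is a group under composition. -/
instance : Group (MonoHomeo L) where
  mul_assoc f g h := Subtype.ext (by ext x; rfl)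
  one_mul f := Subtype.ext (by ext x; rfl)
  mul_one f := Subtype.ext (by ext x; rfl)
  inv_mul_cancel f := Subtype.ext (by ext x; exact f.1.symm_apply_apply x)

end MonoHomeo

/-- For a GO-space `L`: if for every `x ∈ L` isolated from at least one side and
every `y ∈ L` the set `W(x;{y}) = {f ∈ M(L) : f x = y}` is open in `M_p(L)`, then inversion
`f ↦ f⁻¹` is continuous on `M_p(L)`. -/
theorem continuous_inv_of_isOpen
    {L : Type*} [LinearOrder L] [TopologicalSpace L]
    (GO_fine : ∀ s : Set L, IsOpen[Preorder.topology L] s → IsOpen s)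
    (GO_basis : ∃ B : Set (Set L), (∀ s ∈ B, s.OrdConnected) ∧
      TopologicalSpace.IsTopologicalBasis B)
    (hopen : ∀ x : L, (𝓝[>] x = ⊥ ∨ 𝓝[<] x = ⊥) →
      ∀ y : L, IsOpen {f : MonoHomeo L | f.1 x = y}) :
    Continuous fun f : MonoHomeo L => f⁻¹ := by
  obtain ⟨B, hBconv, hBbasis⟩ := GO_basis
  have hIio : ∀ y : L, IsOpen (Iio y) := fun y =>
    GO_fine _ (TopologicalSpace.GenerateOpen.basic _ ⟨y, Or.inr rfl⟩)
  have hIoi : ∀ y : L, IsOpen (Ioi y) := fun y =>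
    GO_fine _ (TopologicalSpace.GenerateOpen.basic _ ⟨y, Or.inl rfl⟩)
  have heval : ∀ a : L, Continuous fun g : MonoHomeo L => g.1 a :=
    fun a => (continuous_apply a).comp continuous_induced_dom
  rw [continuous_induced_rng, continuous_pi_iff]
  intro x
  rw [continuous_def]
  intro U hU
  rw [isOpen_iff_mem_nhds]
  intro f hf
  have hfU : f.1.symm x ∈ U := hf
  set p := f.1.symm x with hp
  have hfp : f.1 p = x := f.1.apply_symm_apply x
  by_cases hiso : 𝓝[>] p = ⊥ ∨ 𝓝[<] p = ⊥
  · refine Filter.mem_of_superset ((hopen p hiso x).mem_nhds hfp) ?_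
    intro g hg
    have hg' : g.1 p = x := hg
    have : g.1.symm x = p := by rw [← hg']; exact g.1.symm_apply_apply p
    show g.1.symm x ∈ U
    rw [this]; exact hfU
  · push_neg at hiso
    obtain ⟨h₁, h₂⟩ := hiso
    obtain ⟨V, hVB, hpV, hVU⟩ := hBbasis.exists_subset_of_mem_open hfU hU
    have hVnhds : V ∈ 𝓝 p := (hBbasis.isOpen hVB).mem_nhds hpV
    haveI : (𝓝[>] p).NeBot := h₁
    haveI : (𝓝[<] p).NeBot := h₂
    obtain ⟨b, hbV, hpb⟩ : ∃ b, b ∈ V ∧ p < b := by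
      have hmem : V ∩ Ioi p ∈ 𝓝[>] p :=
        Filter.inter_mem (mem_nhdsWithin_of_mem_nhds hVnhds) self_mem_nhdsWithin
      obtain ⟨b, hb⟩ := Filter.nonempty_of_mem hmem
      exact ⟨b, hb.1, hb.2⟩
    obtain ⟨a, haV, hap⟩ : ∃ a, a ∈ V ∧ a < p := by
      have hmem : V ∩ Iio p ∈ 𝓝[<] p :=
        Filter.inter_mem (mem_nhdsWithin_of_mem_nhds hVnhds) self_mem_nhdsWithin
      obtain ⟨a, ha⟩ := Filter.nonempty_of_mem hmem
      exact ⟨a, ha.1, ha.2⟩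
    have hab : a < b := hap.trans hpb
    set W : Set (MonoHomeo L) :=
      ({g | g.1 a ∈ Iio x} ∩ {g | g.1 b ∈ Ioi x}) ∪
      ({g | g.1 a ∈ Ioi x} ∩ {g | g.1 b ∈ Iio x}) with hW
    have hWopen : IsOpen W := by
      apply IsOpen.union
      · exact (((hIio x).preimage (heval a)).inter ((hIoi x).preimage (heval b)))
      · exact (((hIoi x).preimage (heval a)).inter ((hIio x).preimage (heval b)))
    have hfW : f ∈ W := by
      rcases f.2 with hm | ha'
      · exact Or.inl ⟨by simpa [hfp] using hm hap, by simpa [hfp] using hm hpb⟩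
      · exact Or.inr ⟨by simpa [hfp] using ha' hap, by simpa [hfp] using ha' hpb⟩
    refine Filter.mem_of_superset (hWopen.mem_nhds hfW) ?_
    intro g hg
    show g.1.symm x ∈ U
    set q := g.1.symm x with hq
    have hgq : g.1 q = x := g.1.apply_symm_apply x
    apply hVU
    rcases hg with ⟨hga, hgb⟩ | ⟨hga, hgb⟩
    · rcases g.2 with hm | ha'
      · have haq : a < q := hm.lt_iff_lt.mp (by rw [hgq]; exact hga)
        have hqb : q < b := hm.lt_iff_lt.mp (by rw [hgq]; exact hgb)
        exact (hBconv V hVB).out haV hbV ⟨haq.le, hqb.le⟩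
      · have : q < a := ha'.lt_iff_gt.mp (by rw [hgq]; exact hga)
        have : b < q := ha'.lt_iff_gt.mp (by rw [hgq]; exact hgb)
        exact absurd (hab.trans (‹b < q›.trans ‹q < a›)) (lt_irrefl a)
    · rcases g.2 with hm | ha'
      · have : q < a := hm.lt_iff_lt.mp (by rw [hgq]; exact hga)
        have : b < q := hm.lt_iff_lt.mp (by rw [hgq]; exact hgb)
        exact absurd (hab.trans (‹b < q›.trans ‹q < a›)) (lt_irrefl a)
      · have haq : a < q := ha'.lt_iff_gt.mp (by rw [hgq]; exact hga)
        have hqb : q < b := ha'.lt_iff_gt.mp (by rw [hgq]; exact hgb)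
        exact (hBconv V hVB).out haV hbV ⟨haq.le, hqb.le⟩
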